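/- arXiv:2206.12331 — 3 statements merged into one kernel-verified Lean document; each statement's English description precedes it below -/
import Mathlib

section
/- In the 1D discrete TGV formulation, a piecewise constant function u on a partition of an interval Ω satisfies FETGV²_{(α₀,α₁)}(u) = 0 if and only if u interpolates an affine function at the midpoints of the subintervals; i.e., there exist constants c, d such that the value of u on each subinterval I equals c·(midpoint of I) + d. -/
/-!
For data that is affine in the midpoints with slope `c`, the constant field `w = c` cancels
every jump term and has no variation, so the energy vanishes. Conversely, at two adjacent
interior vertices the two jump terms and the variation of `w` between them bound, by the
triangle inequality and up to a positive factor, the change of the difference quotient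
`[u] / h_V` from one vertex to the next. If the infimum vanishes, all difference quotients
therefore agree, and summing `[u] = c h_V` shows that `u` is affine in the midpoints.
-/

open Finset

noncomputable section

namespace DiscreteTGV

theorem eq_of_forall_succ_eq {α : Type*} {s : ℕ → α} {a n : ℕ}
    (h : ∀ i, a ≤ i → i + 1 < n → s (i + 1) = s i) : ∀ i ∈ Ico a n, s i = s a := by
  intro i hi
  obtain ⟨hai, hin⟩ := mem_Ico.mp hi
  clear hi
  induction i, hai using Nat.le_induction with
  | base => rfl
  | succ k hak ih => rw [h k hak hin, ih (by omega)]

theorem eq_mul_add_of_forall_sub_eq {u m : ℕ → ℝ} {c : ℝ} {a n : ℕ}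
    (h : ∀ i ∈ Ico a n, u (i + 1) - u i = c * (m (i + 1) - m i)) :
    ∀ i ∈ Icc a n, u i = c * m i + (u a - c * m a) := by
  intro i hi
  obtain ⟨hai, hin⟩ := mem_Icc.mp hi
  clear hi
  induction i, hai using Nat.le_induction with
  | base => ring
  | succ k hak ih =>
    have := h k (mem_Ico.mpr ⟨hak, by omega⟩)
    linarith [ih (by omega)]

variable {n : ℕ} {x u : ℕ → ℝ} {α₀ α₁ : ℝ}

def cellMidpoint (x : ℕ → ℝ) (i : ℕ) : ℝ := (x (i - 1) + x i) / 2

def vertexGap (x : ℕ → ℝ) (i : ℕ) : ℝ := (x (i + 1) - x (i - 1)) / 2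

def vertexSlope (x u : ℕ → ℝ) (i : ℕ) : ℝ := (u (i + 1) - u i) / vertexGap x i

def tgvEnergy (n : ℕ) (x u : ℕ → ℝ) (α₀ α₁ : ℝ) (w : ℕ → ℝ) : ℝ :=
  α₁ * ∑ i ∈ Ico 1 n, |(u (i + 1) - u i) - vertexGap x i * w i|
    + α₀ * ∑ i ∈ Icc 1 n, |w i - w (i - 1)|

theorem vertexGap_eq_sub_cellMidpoint (x : ℕ → ℝ) (i : ℕ) :
    vertexGap x i = cellMidpoint x (i + 1) - cellMidpoint x i := by
  simp only [vertexGap, cellMidpoint, Nat.add_sub_cancel]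
  ring

theorem vertexGap_pos (hx : ∀ i < n, x i < x (i + 1)) {i : ℕ} (hi : 1 ≤ i) (hin : i < n) :
    0 < vertexGap x i := by
  obtain ⟨p, rfl⟩ : ∃ p, i = p + 1 := ⟨i - 1, by omega⟩
  simp only [vertexGap, Nat.add_sub_cancel]
  linarith [hx p (by omega), hx (p + 1) hin]

theorem tgvEnergy_nonneg (hα₀ : 0 ≤ α₀) (hα₁ : 0 ≤ α₁) (w : ℕ → ℝ) :
    0 ≤ tgvEnergy n x u α₀ α₁ w := by
  unfold tgvEnergy
  have h₁ : 0 ≤ ∑ i ∈ Ico 1 n, |(u (i + 1) - u i) - vertexGap x i * w i| :=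
    sum_nonneg fun _ _ => abs_nonneg _
  have h₀ : 0 ≤ ∑ i ∈ Icc 1 n, |w i - w (i - 1)| := sum_nonneg fun _ _ => abs_nonneg _
  positivity

theorem tgvEnergy_const_eq_zero {c : ℝ}
    (h : ∀ i ∈ Ico 1 n, u (i + 1) - u i = c * vertexGap x i) :
    tgvEnergy n x u α₀ α₁ (fun _ => c) = 0 := by
  have h₁ : ∑ i ∈ Ico 1 n, |(u (i + 1) - u i) - vertexGap x i * c| = 0 :=
    sum_eq_zero fun i hi => by rw [h i hi, mul_comm, sub_self, abs_zero]
  simp [tgvEnergy, h₁]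

theorem min_mul_abs_div_sub_div_le (hα₀ : 0 ≤ α₀) (hα₁ : 0 ≤ α₁) {H₀ H₁ : ℝ} (hH₀ : 0 < H₀)
    (hH₁ : 0 < H₁) (Δ₀ Δ₁ w₀ w₁ : ℝ) :
    min (min (α₁ * H₀) (α₁ * H₁)) α₀ * |Δ₁ / H₁ - Δ₀ / H₀|
      ≤ α₁ * (|Δ₀ - H₀ * w₀| + |Δ₁ - H₁ * w₁|) + α₀ * |w₁ - w₀| := by
  have scale : ∀ {Δ H w : ℝ}, 0 < H → |Δ - H * w| = H * |Δ / H - w| := fun {Δ H w} hH => by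
    rw [← abs_of_pos hH, ← abs_mul, abs_of_pos hH, mul_sub, mul_div_cancel₀ _ hH.ne']
  set β := min (min (α₁ * H₀) (α₁ * H₁)) α₀
  have hβ : 0 ≤ β := le_min (le_min (by positivity) (by positivity)) hα₀
  have hβ₀ : β ≤ α₁ * H₀ := (min_le_left _ _).trans (min_le_left _ _)
  have hβ₁ : β ≤ α₁ * H₁ := (min_le_left _ _).trans (min_le_right _ _)
  have hβα₀ : β ≤ α₀ := min_le_right _ _
  have htri : |Δ₁ / H₁ - Δ₀ / H₀| ≤ |Δ₀ / H₀ - w₀| + |Δ₁ / H₁ - w₁| + |w₁ - w₀| := by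
    have := abs_sub_le (Δ₁ / H₁) w₁ w₀
    have := abs_sub_le (Δ₁ / H₁) w₀ (Δ₀ / H₀)
    rw [abs_sub_comm w₀] at this
    linarith
  calc β * |Δ₁ / H₁ - Δ₀ / H₀|
      ≤ β * |Δ₀ / H₀ - w₀| + β * |Δ₁ / H₁ - w₁| + β * |w₁ - w₀| := by
        rw [← mul_add, ← mul_add]
        gcongr
    _ ≤ α₁ * H₀ * |Δ₀ / H₀ - w₀| + α₁ * H₁ * |Δ₁ / H₁ - w₁| + α₀ * |w₁ - w₀| := by
        gcongr
    _ = α₁ * (|Δ₀ - H₀ * w₀| + |Δ₁ - H₁ * w₁|) + α₀ * |w₁ - w₀| := by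
        rw [scale hH₀, scale hH₁]
        ring

theorem min_mul_abs_vertexSlope_sub_le_tgvEnergy (hx : ∀ i < n, x i < x (i + 1))
    (hα₀ : 0 ≤ α₀) (hα₁ : 0 ≤ α₁) {p : ℕ} (hp : 1 ≤ p) (hpn : p + 1 < n) (w : ℕ → ℝ) :
    min (min (α₁ * vertexGap x p) (α₁ * vertexGap x (p + 1))) α₀
        * |vertexSlope x u (p + 1) - vertexSlope x u p|
      ≤ tgvEnergy n x u α₀ α₁ w := by
  have hjumps : ∑ i ∈ {p, p + 1}, |(u (i + 1) - u i) - vertexGap x i * w i|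
      ≤ ∑ i ∈ Ico 1 n, |(u (i + 1) - u i) - vertexGap x i * w i| :=
    sum_le_sum_of_subset_of_nonneg (by intro i; simp; omega) fun _ _ _ => abs_nonneg _
  have hvar : |w (p + 1) - w (p + 1 - 1)| ≤ ∑ i ∈ Icc 1 n, |w i - w (i - 1)| :=
    single_le_sum (f := fun i => |w i - w (i - 1)|) (fun _ _ => abs_nonneg _)
      (mem_Icc.mpr ⟨by omega, by omega⟩)
  rw [sum_pair (by omega)] at hjumps
  rw [Nat.add_sub_cancel] at hvar
  calc _ ≤ _ := min_mul_abs_div_sub_div_le hα₀ hα₁ (vertexGap_pos hx hp (by omega))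
          (vertexGap_pos hx (by omega) hpn) _ _ (w p) (w (p + 1))
    _ ≤ tgvEnergy n x u α₀ α₁ w := by
      unfold tgvEnergy
      gcongr

theorem vertexSlope_succ_eq_of_iInf_tgvEnergy_eq_zero (hx : ∀ i < n, x i < x (i + 1))
    (hα₀ : 0 < α₀) (hα₁ : 0 < α₁) (h0 : ⨅ w, tgvEnergy n x u α₀ α₁ w = 0) {p : ℕ} (hp : 1 ≤ p)
    (hpn : p + 1 < n) : vertexSlope x u (p + 1) = vertexSlope x u p := by
  have hβ : 0 < min (min (α₁ * vertexGap x p) (α₁ * vertexGap x (p + 1))) α₀ :=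
    lt_min (lt_min (mul_pos hα₁ (vertexGap_pos hx hp (by omega)))
      (mul_pos hα₁ (vertexGap_pos hx (by omega) hpn))) hα₀
  have hle :=
    le_ciInf (min_mul_abs_vertexSlope_sub_le_tgvEnergy (u := u) hx hα₀.le hα₁.le hp hpn)
  rw [h0] at hle
  exact sub_eq_zero.mp (abs_nonpos_iff.mp (nonpos_of_mul_nonpos_right hle hβ))

end DiscreteTGV

end

open DiscreteTGV in
theorem stmt7_general
    (n : ℕ) (x : ℕ → ℝ) (hx : ∀ i < n, x i < x (i + 1))
    (u : ℕ → ℝ) (α₀ α₁ : ℝ) (hα₀ : 0 < α₀) (hα₁ : 0 < α₁) :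
    (⨅ w : ℕ → ℝ,
        α₁ * ∑ i ∈ Finset.Ico 1 n, |(u (i + 1) - u i) - ((x (i + 1) - x (i - 1)) / 2) * w i|
        + α₀ * ∑ i ∈ Finset.Icc 1 n, |w i - w (i - 1)|) = 0 ↔
    ∃ c d : ℝ, ∀ i ∈ Finset.Icc 1 n, u i = c * ((x (i - 1) + x i) / 2) + d := by
  change (⨅ w, tgvEnergy n x u α₀ α₁ w) = 0 ↔
    ∃ c d : ℝ, ∀ i ∈ Icc 1 n, u i = c * cellMidpoint x i + d
  constructor
  · intro h0
    have hslope : ∀ i ∈ Ico 1 n, vertexSlope x u i = vertexSlope x u 1 :=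
      eq_of_forall_succ_eq fun p hp hpn =>
        vertexSlope_succ_eq_of_iInf_tgvEnergy_eq_zero hx hα₀ hα₁ h0 hp hpn
    refine ⟨vertexSlope x u 1, _, eq_mul_add_of_forall_sub_eq fun i hi => ?_⟩
    obtain ⟨hi1, hin⟩ := mem_Ico.mp hi
    rw [← vertexGap_eq_sub_cellMidpoint, ← hslope i hi, vertexSlope,
      div_mul_cancel₀ _ (vertexGap_pos hx hi1 hin).ne']
  · rintro ⟨c, d, hu⟩
    have hzero : tgvEnergy n x u α₀ α₁ (fun _ => c) = 0 := tgvEnergy_const_eq_zero fun i hi => by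
      obtain ⟨hi1, hin⟩ := mem_Ico.mp hi
      rw [hu i (mem_Icc.mpr ⟨hi1, hin.le⟩), hu (i + 1) (mem_Icc.mpr ⟨by omega, hin⟩),
        vertexGap_eq_sub_cellMidpoint]
      ring
    have hnonneg := tgvEnergy_nonneg (n := n) (x := x) (u := u) hα₀.le hα₁.le
    exact le_antisymm (hzero ▸ ciInf_le ⟨0, Set.forall_mem_range.mpr hnonneg⟩ _)
      (le_ciInf hnonneg)

/-- 1D discrete TGV. `Ω = [x 0, x n]` is partitioned by vertices
`x 0 < x 1 < ⋯ < x n` into subintervals `Iᵢ = [x (i-1), x i]` (`i = 1, …, n`); `u i` is the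
constant value of `u` on `Iᵢ`. The 1D discrete TGV (infimum over continuous piecewise
affine `w`, represented by its vertex values, with `∫_{Iᵢ} |w'| = |w i − w (i−1)|` and
`h_{Vᵢ} = (x (i+1) − x (i−1))/2` the distance of adjacent midpoints) vanishes iff `u`
interpolates an affine function at the subinterval midpoints. -/
theorem stmt7
    (n : ℕ) (hn : 1 ≤ n) (x : ℕ → ℝ) (hx : ∀ i < n, x i < x (i + 1))
    (u : ℕ → ℝ) (α₀ α₁ : ℝ) (hα₀ : 0 < α₀) (hα₁ : 0 < α₁) :
    (⨅ w : ℕ → ℝ,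
        α₁ * ∑ i ∈ Finset.Ico 1 n, |(u (i + 1) - u i) - ((x (i + 1) - x (i - 1)) / 2) * w i|
        + α₀ * ∑ i ∈ Finset.Icc 1 n, |w i - w (i - 1)|) = 0 ↔
    ∃ c d : ℝ, ∀ i ∈ Finset.Icc 1 n, u i = c * ((x (i - 1) + x i) / 2) + d :=
  stmt7_general n x hx u α₀ α₁ hα₀ hα₁
end

section
/- On a uniform 1D grid with n subintervals of length 1, the proposed discrete TGV formulation in terms of degrees of freedom, min over w ∈ ℝ^{n+1} of α₁ Σ_{i=1}^{n−1} |(u_{i+1} − u_i) − w_{i+1/2}| + α₀ Σ_{i=1}^{n} |w_{i+1/2} − w_{i−1/2}|, is always less than or equal to the finite-difference formulation min over w ∈ ℝⁿ of α₁ Σ_{i=1}^{n−1} |(u_{i+1} − u_i) − w_i| + α₁|w_n| + α₀|w_0| + α₀ Σ_{i=2}^{n−1} |w_i − w_{i−1}| + α₀|w_{n−1}|, for any u ∈ ℝⁿ and α₀, α₁ > 0. -/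
/-!
Every finite-difference field `w` yields a field of degrees of freedom with no larger energy:
keep the interior values `w₁, …, w_{n-1}`, put `w_{1/2} := w₁ - w₀` and `w_{n+1/2} := 0`.
The data terms are unchanged, the two new boundary jumps are exactly `|w₀|` and `|w_{n-1}|`,
and only the nonnegative term `α₁ |w_n|` is lost. For `n ≤ 1` the zero field already has
energy `0`.
-/

namespace TGV1D

open Finset

/-- The value `w i` stands for the degree of freedom `w_{i+1/2}`. -/
def dofEnergy (α₀ α₁ : ℝ) (u : ℕ → ℝ) (n : ℕ) (w : ℕ → ℝ) : ℝ :=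
  α₁ * ∑ i ∈ Ico 1 n, |(u (i + 1) - u i) - w i| + α₀ * ∑ i ∈ Icc 1 n, |w i - w (i - 1)|

def finiteDifferenceEnergy (α₀ α₁ : ℝ) (u : ℕ → ℝ) (n : ℕ) (w : ℕ → ℝ) : ℝ :=
  α₁ * ∑ i ∈ Ico 1 n, |(u (i + 1) - u i) - w i| + α₁ * |w n| + α₀ * |w 0|
    + α₀ * ∑ i ∈ Ico 2 n, |w i - w (i - 1)| + α₀ * |w (n - 1)|

def dofOfFiniteDifference (n : ℕ) (w : ℕ → ℝ) (i : ℕ) : ℝ :=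
  if i = 0 then w 1 - w 0 else if i = n then 0 else w i

variable {α₀ α₁ : ℝ} {u : ℕ → ℝ} {n : ℕ} {w : ℕ → ℝ}

theorem dofEnergy_nonneg (hα₀ : 0 ≤ α₀) (hα₁ : 0 ≤ α₁) (w : ℕ → ℝ) :
    0 ≤ dofEnergy α₀ α₁ u n w := by
  unfold dofEnergy; positivity

theorem finiteDifferenceEnergy_nonneg (hα₀ : 0 ≤ α₀) (hα₁ : 0 ≤ α₁) :
    0 ≤ finiteDifferenceEnergy α₀ α₁ u n w := by
  unfold finiteDifferenceEnergy; positivity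

theorem dofEnergy_zero_of_le_one (hn : n ≤ 1) : dofEnergy α₀ α₁ u n 0 = 0 := by
  simp [dofEnergy, Ico_eq_empty_of_le hn]

theorem dofOfFiniteDifference_of_ne {i : ℕ} (hi₀ : i ≠ 0) (hin : i ≠ n) :
    dofOfFiniteDifference n w i = w i := by
  simp [dofOfFiniteDifference, hi₀, hin]

theorem sum_abs_sub_dofOfFiniteDifference (hn : 2 ≤ n) :
    ∑ i ∈ Icc 1 n, |dofOfFiniteDifference n w i - dofOfFiniteDifference n w (i - 1)|
      = |w 0| + ∑ i ∈ Ico 2 n, |w i - w (i - 1)| + |w (n - 1)| := by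
  obtain ⟨m, rfl⟩ : ∃ m, n = m + 2 := ⟨n - 2, by omega⟩
  have interior : ∑ i ∈ Ico 2 (m + 2),
      |dofOfFiniteDifference (m + 2) w i - dofOfFiniteDifference (m + 2) w (i - 1)|
        = ∑ i ∈ Ico 2 (m + 2), |w i - w (i - 1)| := by
    refine sum_congr rfl fun i hi => ?_
    rw [mem_Ico] at hi
    rw [dofOfFiniteDifference_of_ne (by omega) (by omega),
      dofOfFiniteDifference_of_ne (by omega) (by omega)]
  rw [← Ico_add_one_right_eq_Icc, sum_Ico_succ_top (by omega),
    sum_eq_sum_Ico_succ_bot (by omega), interior]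
  simp [dofOfFiniteDifference]

theorem dofEnergy_dofOfFiniteDifference_le (hα₁ : 0 ≤ α₁) (hn : 2 ≤ n) :
    dofEnergy α₀ α₁ u n (dofOfFiniteDifference n w) ≤ finiteDifferenceEnergy α₀ α₁ u n w := by
  have data : ∑ i ∈ Ico 1 n, |(u (i + 1) - u i) - dofOfFiniteDifference n w i|
      = ∑ i ∈ Ico 1 n, |(u (i + 1) - u i) - w i| := by
    refine sum_congr rfl fun i hi => ?_
    rw [mem_Ico] at hi
    rw [dofOfFiniteDifference_of_ne (by omega) (by omega)]
  rw [dofEnergy, finiteDifferenceEnergy, data, sum_abs_sub_dofOfFiniteDifference hn]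
  linarith [mul_nonneg hα₁ (abs_nonneg (w n))]

theorem exists_dofEnergy_le_finiteDifferenceEnergy (hα₀ : 0 ≤ α₀) (hα₁ : 0 ≤ α₁)
    (w : ℕ → ℝ) : ∃ v, dofEnergy α₀ α₁ u n v ≤ finiteDifferenceEnergy α₀ α₁ u n w := by
  rcases le_or_gt n 1 with hn | hn
  · exact ⟨0, (dofEnergy_zero_of_le_one hn).trans_le (finiteDifferenceEnergy_nonneg hα₀ hα₁)⟩
  · exact ⟨_, dofEnergy_dofOfFiniteDifference_le hα₁ hn⟩

end TGV1D

/-- On a uniform 1D grid with `n` unit subintervals, the proposed discrete TGV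
(minimum over `n+1` degrees of freedom `w_{i+1/2}`, here `w i` for `i = 0, …, n`) is always
at most the finite-difference formulation of Bredies–Kunisch–Pock (minimum over `w₀, …,
w_{n-1}` with boundary terms from one-sided differences), for any `u` and `α₀, α₁ > 0`. -/
theorem stmt8
    (n : ℕ) (u : ℕ → ℝ) (α₀ α₁ : ℝ) (hα₀ : 0 < α₀) (hα₁ : 0 < α₁) :
    (⨅ w : ℕ → ℝ,
        α₁ * ∑ i ∈ Finset.Ico 1 n, |(u (i + 1) - u i) - w i|
        + α₀ * ∑ i ∈ Finset.Icc 1 n, |w i - w (i - 1)|) ≤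
    (⨅ w : ℕ → ℝ,
        α₁ * ∑ i ∈ Finset.Ico 1 n, |(u (i + 1) - u i) - w i|
        + α₁ * |w n| + α₀ * |w 0|
        + α₀ * ∑ i ∈ Finset.Ico 2 n, |w i - w (i - 1)|
        + α₀ * |w (n - 1)|) := by
  show (⨅ w, TGV1D.dofEnergy α₀ α₁ u n w) ≤ ⨅ w, TGV1D.finiteDifferenceEnergy α₀ α₁ u n w
  have bdd : BddBelow (Set.range (TGV1D.dofEnergy α₀ α₁ u n)) :=
    ⟨0, by rintro _ ⟨w, rfl⟩; exact TGV1D.dofEnergy_nonneg hα₀.le hα₁.le w⟩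
  exact ciInf_mono_of_forall_exists bdd
    (TGV1D.exists_dofEnergy_le_finiteDifferenceEnergy hα₀.le hα₁.le)
end

section
/- On a connected conforming triangular mesh with distinct circumcenters across each interior edge, the kernel of the discrete functional FETGV²_{(α₀,α₁)} (defined for piecewise constant u by minimizing over Raviart–Thomas fields w) is exactly the 3-dimensional space of piecewise constant functions that interpolate affine functions at the triangle circumcenters: u is in the kernel iff there exists an affine f: ℝ² → ℝ with u|_T = f(m_T) for every triangle T. -/
/-!
If `u T = ⟪g, m T⟫ + c`, the constant field `w ≡ g` has zero energy: `w` has no gradient and no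
jumps, and `u₊ - u₋ = ⟪g, m₊ - m₋⟫ = -h_E ⟪g, ν_E⟫` cancels the fidelity term.

Conversely, take fields `(a, b)` whose energy tends to `0` (along the filter `comap energy (𝓝 0)`,
which is nontrivial because the infimum is `0`). The gradient term forces `b → 0`, the jump term
then forces `a₊ - a₋ → 0` across every edge, hence, by connectedness of the dual graph,
`a T - a T₀ → 0` for all `T`. The fidelity term now says that the edge differences of `u` are the
limit of `(⟪a T₀, m₊ - m₋⟫)_E`, so they lie in the closed, finite-dimensional range of
`g ↦ (⟪g, m₊ - m₋⟫)_E`; summing along paths of the dual graph gives `u = ⟪g, m⟫ + c`.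
-/
open Filter Topology Finset Relation
open scoped RealInnerProductSpace

def dualAdj {ι κ : Type*} (plus minus : κ → ι) (s t : ι) : Prop :=
  ∃ e, (plus e = s ∧ minus e = t) ∨ (plus e = t ∧ minus e = s)

theorem rel_of_reflTransGen_dualAdj {ι κ : Type*} {plus minus : κ → ι} {r : ι → ι → Prop}
    (hr : Equivalence r) (hedge : ∀ e, r (plus e) (minus e)) {i j : ι}
    (hij : ReflTransGen (dualAdj plus minus) i j) : r i j := by
  induction hij with
  | refl => exact hr.refl i
  | tail _ hst ih =>
    obtain ⟨e, ⟨rfl, rfl⟩ | ⟨rfl, rfl⟩⟩ := hst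
    · exact hr.trans ih (hedge e)
    · exact hr.trans ih (hr.symm (hedge e))

theorem exists_eq_inner_add_of_edge_sub {ι κ E : Type*} [NormedAddCommGroup E]
    [InnerProductSpace ℝ E] [Nonempty ι] {plus minus : κ → ι} {m : ι → E} {u : ι → ℝ} {g : E}
    (hconn : ∀ i j, ReflTransGen (dualAdj plus minus) i j)
    (hg : ∀ e, u (plus e) - u (minus e) = ⟪g, m (plus e) - m (minus e)⟫) :
    ∃ c, ∀ T, u T = ⟪g, m T⟫ + c := by
  obtain ⟨T₀⟩ := ‹Nonempty ι›
  refine ⟨u T₀ - ⟪g, m T₀⟫, fun T => ?_⟩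
  have : u T - ⟪g, m T⟫ = u T₀ - ⟪g, m T₀⟫ :=
    rel_of_reflTransGen_dualAdj (r := fun i j => u i - ⟪g, m i⟫ = u j - ⟪g, m j⟫)
      ⟨fun _ => rfl, Eq.symm, Eq.trans⟩
      (fun e => by have := hg e; rw [inner_sub_right] at this; linarith) (hconn T T₀)
  linarith

theorem neBot_comap_nhds_ciInf {X α : Type*} [ConditionallyCompleteLinearOrder α]
    [TopologicalSpace α] [OrderTopology α] [Nonempty X] {f : X → α}
    (hf : BddBelow (Set.range f)) : (comap f (𝓝 (⨅ x, f x))).NeBot :=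
  comap_neBot fun t ht => by
    obtain ⟨_, hy, x, rfl⟩ :=
      mem_closure_iff_nhds.1 (csInf_mem_closure (Set.range_nonempty f) hf) t ht
    exact ⟨x, hy⟩

theorem tendsto_zero_of_const_mul_le {α : Type*} {l : Filter α} {f g : α → ℝ} {c : ℝ}
    (hc : 0 < c) (hf : ∀ x, 0 ≤ f x) (hfg : ∀ x, c * f x ≤ g x) (hg : Tendsto g l (𝓝 0)) :
    Tendsto f l (𝓝 0) :=
  squeeze_zero hf (fun x => (le_div_iff₀' hc).2 (hfg x)) (by simpa using hg.div_const c)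

namespace FETGV

variable {ι κ E : Type*} [Fintype κ] [NormedAddCommGroup E] [InnerProductSpace ℝ E]

def field (a : ι → E) (b : ι → ℝ) (T : ι) (x : E) : E := a T + b T • x

section Energy

variable (plus minus : κ → ι) (P Q ν : κ → E) (h : κ → ℝ) (A : ι → ℝ) (α₀ α₁ : ℝ) (u : ι → ℝ)
  (a : ι → E) (b : ι → ℝ)

/- The three terms of `FETGV²` at the Raviart–Thomas field `w = field a b`. The normal trace
`⟪w, ν_E⟫` is constant along `E`, so the `L¹(E)` fidelity is `|E|` times its value at `P e`;
`∫_T |∇w|_F = A_T √2 |b T|`; and `∫_E I_E(|[w]|)` is the trapezoid rule at `P e`, `Q e`. -/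
noncomputable def fidelity : ℝ :=
  ∑ e, dist (P e) (Q e) * |u (plus e) - u (minus e) + h e * ⟪field a b (plus e) (P e), ν e⟫|

noncomputable def gradientPenalty [Fintype ι] : ℝ := ∑ T, A T * (|b T| * √2)

noncomputable def jumpPenalty : ℝ :=
  ∑ e, dist (P e) (Q e) / 2 *
    (‖field a b (plus e) (P e) - field a b (minus e) (P e)‖ +
      ‖field a b (plus e) (Q e) - field a b (minus e) (Q e)‖)

noncomputable def energy [Fintype ι] : ℝ :=
  α₁ * fidelity plus minus P Q ν h u a b + α₀ * gradientPenalty A b +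
    α₀ * jumpPenalty plus minus P Q a b

end Energy

variable {plus minus : κ → ι} {P Q ν : κ → E} {h : κ → ℝ} {A : ι → ℝ} {α₀ α₁ : ℝ} {u : ι → ℝ}
  {a : ι → E} {b : ι → ℝ}

theorem fidelity_nonneg : 0 ≤ fidelity plus minus P Q ν h u a b := by
  unfold fidelity; positivity

theorem gradientPenalty_nonneg [Fintype ι] (hA : ∀ T, 0 ≤ A T) : 0 ≤ gradientPenalty A b :=
  sum_nonneg fun T _ => mul_nonneg (hA T) (by positivity)

theorem jumpPenalty_nonneg : 0 ≤ jumpPenalty plus minus P Q a b := by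
  unfold jumpPenalty; positivity

section Bounds

variable [Fintype ι]

theorem energy_nonneg (hA : ∀ T, 0 ≤ A T) (hα₀ : 0 ≤ α₀) (hα₁ : 0 ≤ α₁) :
    0 ≤ energy plus minus P Q ν h A α₀ α₁ u a b :=
  add_nonneg (add_nonneg (mul_nonneg hα₁ fidelity_nonneg)
    (mul_nonneg hα₀ (gradientPenalty_nonneg hA))) (mul_nonneg hα₀ jumpPenalty_nonneg)

theorem mul_abs_residual_le_energy (hA : ∀ T, 0 ≤ A T) (hα₀ : 0 ≤ α₀) (hα₁ : 0 ≤ α₁) (e : κ) :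
    α₁ * dist (P e) (Q e) * |u (plus e) - u (minus e) + h e * ⟪field a b (plus e) (P e), ν e⟫| ≤
      energy plus minus P Q ν h A α₀ α₁ u a b := by
  have hG : 0 ≤ α₀ * gradientPenalty A b := mul_nonneg hα₀ (gradientPenalty_nonneg hA)
  have hJ : 0 ≤ α₀ * jumpPenalty plus minus P Q a b := mul_nonneg hα₀ jumpPenalty_nonneg
  calc _ = α₁ * (dist (P e) (Q e) *
        |u (plus e) - u (minus e) + h e * ⟪field a b (plus e) (P e), ν e⟫|) := mul_assoc ..
    _ ≤ α₁ * fidelity plus minus P Q ν h u a b := by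
      gcongr
      apply single_le_sum (fun e _ => ?_) (mem_univ e)
      positivity
    _ ≤ _ := by unfold energy; linarith

theorem mul_abs_le_energy (hA : ∀ T, 0 ≤ A T) (hα₀ : 0 ≤ α₀) (hα₁ : 0 ≤ α₁) (T : ι) :
    α₀ * (A T * √2) * |b T| ≤ energy plus minus P Q ν h A α₀ α₁ u a b := by
  have hF : 0 ≤ α₁ * fidelity plus minus P Q ν h u a b := mul_nonneg hα₁ fidelity_nonneg
  have hJ : 0 ≤ α₀ * jumpPenalty plus minus P Q a b := mul_nonneg hα₀ jumpPenalty_nonneg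
  calc _ = α₀ * (A T * (|b T| * √2)) := by ring
    _ ≤ α₀ * gradientPenalty A b := by
      gcongr
      apply single_le_sum (fun T _ => ?_) (mem_univ T)
      exact mul_nonneg (hA T) (by positivity)
    _ ≤ _ := by unfold energy; linarith

theorem mul_norm_jump_le_energy (hA : ∀ T, 0 ≤ A T) (hα₀ : 0 ≤ α₀) (hα₁ : 0 ≤ α₁) (e : κ) :
    α₀ * (dist (P e) (Q e) / 2) * ‖field a b (plus e) (P e) - field a b (minus e) (P e)‖ ≤
      energy plus minus P Q ν h A α₀ α₁ u a b := by
  have hF : 0 ≤ α₁ * fidelity plus minus P Q ν h u a b := mul_nonneg hα₁ fidelity_nonneg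
  have hG : 0 ≤ α₀ * gradientPenalty A b := mul_nonneg hα₀ (gradientPenalty_nonneg hA)
  calc
    _ ≤ α₀ * (dist (P e) (Q e) / 2 *
        (‖field a b (plus e) (P e) - field a b (minus e) (P e)‖ +
          ‖field a b (plus e) (Q e) - field a b (minus e) (Q e)‖)) := by
      rw [mul_assoc]; gcongr; exact le_add_of_nonneg_right (norm_nonneg _)
    _ ≤ α₀ * jumpPenalty plus minus P Q a b := by
      gcongr
      apply single_le_sum (fun e _ => ?_) (mem_univ e)
      positivity
    _ ≤ _ := by unfold energy; linarith

end Bounds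

section Limits

variable [Fintype ι] {α : Type*} {l : Filter α} {a : α → ι → E} {b : α → ι → ℝ}

theorem tendsto_residual_of_tendsto_energy (hA : ∀ T, 0 < A T) (hPQ : ∀ e, P e ≠ Q e)
    (hα₀ : 0 < α₀) (hα₁ : 0 < α₁)
    (hJ : Tendsto (fun x => energy plus minus P Q ν h A α₀ α₁ u (a x) (b x)) l (𝓝 0)) (e : κ) :
    Tendsto (fun x => u (plus e) - u (minus e) + h e * ⟪field (a x) (b x) (plus e) (P e), ν e⟫)
      l (𝓝 0) :=
  (tendsto_zero_iff_abs_tendsto_zero _).2 <|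
    tendsto_zero_of_const_mul_le (mul_pos hα₁ (dist_pos.2 (hPQ e))) (fun _ => abs_nonneg _)
      (fun _ => mul_abs_residual_le_energy (fun T => (hA T).le) hα₀.le hα₁.le e) hJ

theorem tendsto_coeff_of_tendsto_energy (hA : ∀ T, 0 < A T) (hα₀ : 0 < α₀) (hα₁ : 0 < α₁)
    (hJ : Tendsto (fun x => energy plus minus P Q ν h A α₀ α₁ u (a x) (b x)) l (𝓝 0)) (T : ι) :
    Tendsto (fun x => b x T) l (𝓝 0) :=
  (tendsto_zero_iff_abs_tendsto_zero _).2 <|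
    tendsto_zero_of_const_mul_le (by have := hA T; positivity) (fun _ => abs_nonneg _)
      (fun _ => mul_abs_le_energy (fun T => (hA T).le) hα₀.le hα₁.le T) hJ

theorem tendsto_jump_of_tendsto_energy (hA : ∀ T, 0 < A T) (hPQ : ∀ e, P e ≠ Q e)
    (hα₀ : 0 < α₀) (hα₁ : 0 < α₁)
    (hJ : Tendsto (fun x => energy plus minus P Q ν h A α₀ α₁ u (a x) (b x)) l (𝓝 0)) (e : κ) :
    Tendsto (fun x => field (a x) (b x) (plus e) (P e) - field (a x) (b x) (minus e) (P e))
      l (𝓝 0) :=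
  tendsto_zero_iff_norm_tendsto_zero.2 <|
    tendsto_zero_of_const_mul_le (by have := dist_pos.2 (hPQ e); positivity)
      (fun _ => norm_nonneg _)
      (fun _ => mul_norm_jump_le_energy (fun T => (hA T).le) hα₀.le hα₁.le e) hJ

theorem tendsto_sub_of_tendsto_energy (hA : ∀ T, 0 < A T) (hPQ : ∀ e, P e ≠ Q e)
    (hα₀ : 0 < α₀) (hα₁ : 0 < α₁) (hconn : ∀ i j, ReflTransGen (dualAdj plus minus) i j)
    (hJ : Tendsto (fun x => energy plus minus P Q ν h A α₀ α₁ u (a x) (b x)) l (𝓝 0)) (i j : ι) :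
    Tendsto (fun x => a x i - a x j) l (𝓝 0) := by
  refine rel_of_reflTransGen_dualAdj (r := fun i j => Tendsto (fun x => a x i - a x j) l (𝓝 0))
    ⟨fun _ => ?_, fun hij => ?_, fun hij hjk => ?_⟩ (fun e => ?_) (hconn i j)
  · simpa using tendsto_const_nhds (x := (0 : E))
  · simpa using hij.neg
  · simpa using hij.add hjk
  · have hb := tendsto_coeff_of_tendsto_energy hA hα₀ hα₁ hJ
    have := (tendsto_jump_of_tendsto_energy hA hPQ hα₀ hα₁ hJ e).sub
      (((hb (plus e)).sub (hb (minus e))).smul_const (P e))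
    simp only [sub_zero, zero_smul] at this
    refine this.congr fun x => ?_
    simp only [field, sub_smul]; abel

theorem exists_edge_sub_eq_inner_of_tendsto_energy [l.NeBot] [Nonempty ι] {m : ι → E}
    (hA : ∀ T, 0 < A T) (hPQ : ∀ e, P e ≠ Q e) (hα₀ : 0 < α₀) (hα₁ : 0 < α₁)
    (hhν : ∀ e, -h e • ν e = m (plus e) - m (minus e))
    (hconn : ∀ i j, ReflTransGen (dualAdj plus minus) i j)
    (hJ : Tendsto (fun x => energy plus minus P Q ν h A α₀ α₁ u (a x) (b x)) l (𝓝 0)) :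
    ∃ g : E, ∀ e, u (plus e) - u (minus e) = ⟪g, m (plus e) - m (minus e)⟫ := by
  obtain ⟨T₀⟩ := ‹Nonempty ι›
  let L : E →ₗ[ℝ] κ → ℝ := LinearMap.pi fun e => innerₛₗ ℝ (m (plus e) - m (minus e))
  have hL : Tendsto (fun x => L (a x T₀)) l (𝓝 fun e => u (plus e) - u (minus e)) := by
    refine tendsto_pi_nhds.2 fun e => ?_
    have hclose : Tendsto (fun x => field (a x) (b x) (plus e) (P e) - a x T₀) l (𝓝 0) := by
      have := (tendsto_sub_of_tendsto_energy hA hPQ hα₀ hα₁ hconn hJ (plus e) T₀).add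
        ((tendsto_coeff_of_tendsto_energy hA hα₀ hα₁ hJ (plus e)).smul_const (P e))
      simp only [zero_smul, add_zero] at this
      exact this.congr fun x => by simp only [field]; abel
    have := (tendsto_const_nhds (x := u (plus e) - u (minus e))).sub
      (tendsto_residual_of_tendsto_energy hA hPQ hα₀ hα₁ hJ e) |>.add
      ((hclose.inner (tendsto_const_nhds (x := ν e))).const_mul (h e))
    simp only [sub_zero, inner_zero_left, mul_zero, add_zero] at this
    refine this.congr fun x => ?_
    change _ = ⟪m (plus e) - m (minus e), a x T₀⟫
    rw [← hhν, inner_sub_left, real_inner_smul_left, real_inner_comm (a x T₀)]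
    ring
  obtain ⟨g, hg⟩ := (Submodule.closed_of_finiteDimensional (LinearMap.range L)).mem_of_tendsto hL
    (Eventually.of_forall fun x => LinearMap.mem_range_self L _)
  exact ⟨g, fun e => by simpa [L, real_inner_comm, inner_sub_right] using (congrFun hg e).symm⟩

theorem exists_eq_inner_add_of_tendsto_energy [l.NeBot] {m : ι → E}
    (hA : ∀ T, 0 < A T) (hPQ : ∀ e, P e ≠ Q e) (hα₀ : 0 < α₀) (hα₁ : 0 < α₁)
    (hhν : ∀ e, -h e • ν e = m (plus e) - m (minus e))
    (hconn : ∀ i j, ReflTransGen (dualAdj plus minus) i j)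
    (hJ : Tendsto (fun x => energy plus minus P Q ν h A α₀ α₁ u (a x) (b x)) l (𝓝 0)) :
    ∃ (g : E) (c : ℝ), ∀ T, u T = ⟪g, m T⟫ + c := by
  rcases isEmpty_or_nonempty ι with hι | hι
  · exact ⟨0, 0, isEmptyElim⟩
  obtain ⟨g, hg⟩ := exists_edge_sub_eq_inner_of_tendsto_energy hA hPQ hα₀ hα₁ hhν hconn hJ
  exact ⟨g, exists_eq_inner_add_of_edge_sub hconn hg⟩

end Limits

theorem energy_const_eq_zero [Fintype ι] {m : ι → E} {g : E} {c : ℝ}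
    (hhν : ∀ e, -h e • ν e = m (plus e) - m (minus e)) (hu : ∀ T, u T = ⟪g, m T⟫ + c) :
    energy plus minus P Q ν h A α₀ α₁ u (fun _ => g) 0 = 0 := by
  have hres : ∀ e, u (plus e) - u (minus e) + h e * ⟪g, ν e⟫ = 0 := fun e => by
    rw [hu, hu, add_sub_add_right_eq_sub, ← inner_sub_right, ← hhν, real_inner_smul_right]
    ring
  simp [energy, fidelity, gradientPenalty, jumpPenalty, field, hres]

theorem iInf_energy_eq_zero_iff [Fintype ι] {m : ι → E} {C : (ι → E) × (ι → ℝ) → Prop}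
    (hC : ∀ g, C (fun _ => g, 0)) (hA : ∀ T, 0 < A T) (hPQ : ∀ e, P e ≠ Q e)
    (hα₀ : 0 < α₀) (hα₁ : 0 < α₁) (hhν : ∀ e, -h e • ν e = m (plus e) - m (minus e))
    (hconn : ∀ i j, ReflTransGen (dualAdj plus minus) i j) :
    ⨅ p : {p // C p}, energy plus minus P Q ν h A α₀ α₁ u p.1.1 p.1.2 = 0 ↔
      ∃ (g : E) (c : ℝ), ∀ T, u T = ⟪g, m T⟫ + c := by
  have : Nonempty {p // C p} := ⟨⟨_, hC 0⟩⟩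
  have hnonneg (p : {p // C p}) : 0 ≤ energy plus minus P Q ν h A α₀ α₁ u p.1.1 p.1.2 :=
    energy_nonneg (fun T => (hA T).le) hα₀.le hα₁.le
  have hbdd := (⟨0, Set.forall_mem_range.2 hnonneg⟩ :
    BddBelow (Set.range fun p : {p // C p} => energy plus minus P Q ν h A α₀ α₁ u p.1.1 p.1.2))
  constructor
  · intro h0
    have := neBot_comap_nhds_ciInf hbdd
    rw [h0] at this
    exact exists_eq_inner_add_of_tendsto_energy (a := fun p : {p // C p} => p.1.1)
      (b := fun p => p.1.2) hA hPQ hα₀ hα₁ hhν hconn tendsto_comap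
  · rintro ⟨g, c, hu⟩
    exact le_antisymm ((ciInf_le hbdd ⟨_, hC g⟩).trans_eq (energy_const_eq_zero hhν hu))
      (le_ciInf hnonneg)

end FETGV

theorem stmt14_general
    {ι κ : Type} [Fintype ι] [Fintype κ]
    (plus minus : κ → ι)
    (m : ι → EuclideanSpace ℝ (Fin 2)) (A : ι → ℝ) (hA : ∀ T, 0 < A T)
    (P Q : κ → EuclideanSpace ℝ (Fin 2)) (hPQ : ∀ e, P e ≠ Q e)
    (ν : κ → EuclideanSpace ℝ (Fin 2))
    (h : κ → ℝ)
    (hhν : ∀ e, - (h e) • ν e = m (plus e) - m (minus e))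
    (hconn : ∀ i j : ι, Relation.ReflTransGen
        (fun s t => ∃ e, (plus e = s ∧ minus e = t) ∨ (plus e = t ∧ minus e = s)) i j)
    (α₀ α₁ : ℝ) (hα₀ : 0 < α₀) (hα₁ : 0 < α₁)
    (u : ι → ℝ) :
    (⨅ p : {p : (ι → EuclideanSpace ℝ (Fin 2)) × (ι → ℝ) //
        ∀ e : κ, ∀ x ∈ segment ℝ (P e) (Q e),
          (inner ℝ ((p.1 (plus e) + p.2 (plus e) • x) -
                  (p.1 (minus e) + p.2 (minus e) • x)) (ν e) : ℝ) = 0},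
      α₁ * ∑ e : κ, dist (P e) (Q e) *
          |(u (plus e) - u (minus e)) +
            h e * (inner ℝ (p.1.1 (plus e) + p.1.2 (plus e) • P e) (ν e) : ℝ)|
      + α₀ * ∑ T : ι, A T * (|p.1.2 T| * Real.sqrt 2)
      + α₀ * ∑ e : κ, (dist (P e) (Q e) / 2) *
          (‖(p.1.1 (plus e) + p.1.2 (plus e) • P e) -
              (p.1.1 (minus e) + p.1.2 (minus e) • P e)‖ +
           ‖(p.1.1 (plus e) + p.1.2 (plus e) • Q e) -
              (p.1.1 (minus e) + p.1.2 (minus e) • Q e)‖)) = 0 ↔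
    (∃ (g : EuclideanSpace ℝ (Fin 2)) (c : ℝ),
      ∀ T : ι, u T = (inner ℝ g (m T) : ℝ) + c) :=
  FETGV.iInf_energy_eq_zero_iff (fun _ _ _ _ => by simp) hA hPQ hα₀ hα₁ hhν hconn

/-- On a connected conforming triangular mesh (triangles `ι` with circumcenters
`m T` and areas `A T > 0`; interior edges `κ` given as segments from `P e` to `Q e` with unit
normal `ν e` and adjacent triangles `plus e`, `minus e`; `h e = |m₊ − m₋|₂ > 0` with
`−h e • ν e = m₊ − m₋`), the kernel of the discrete functional `FETGV²_{(α₀,α₁)}` — the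
infimum over Raviart–Thomas fields `w|_T(x) = a T + b T • x` with continuous normal
components of `α₁ Σ_E ‖[u] + h_E ⟨w, μ₊⟩‖_{L¹(E)} + α₀ Σ_T ∫_T |∇w|_F + α₀ Σ_E ∫_E I_E(|[w]|₂)`
(the normal trace being constant along each edge, and `|∇w|_F = |b T| √2`) — consists exactly
of the piecewise constant functions interpolating an affine function at the circumcenters. -/
theorem stmt14
    {ι κ : Type} [Fintype ι] [Fintype κ]
    (plus minus : κ → ι)
    (m : ι → EuclideanSpace ℝ (Fin 2)) (A : ι → ℝ) (hA : ∀ T, 0 < A T)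
    (P Q : κ → EuclideanSpace ℝ (Fin 2)) (hPQ : ∀ e, P e ≠ Q e)
    (ν : κ → EuclideanSpace ℝ (Fin 2)) (hν : ∀ e, ‖ν e‖ = 1)
    (hνperp : ∀ e, (inner ℝ (ν e) (Q e - P e) : ℝ) = 0)
    (h : κ → ℝ) (hh : ∀ e, h e = ‖m (plus e) - m (minus e)‖)
    (hhν : ∀ e, - (h e) • ν e = m (plus e) - m (minus e))
    (hdistinct : ∀ e, m (plus e) ≠ m (minus e))
    (hconn : ∀ i j : ι, Relation.ReflTransGen
        (fun s t => ∃ e, (plus e = s ∧ minus e = t) ∨ (plus e = t ∧ minus e = s)) i j)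
    (α₀ α₁ : ℝ) (hα₀ : 0 < α₀) (hα₁ : 0 < α₁)
    (u : ι → ℝ) :
    (⨅ p : {p : (ι → EuclideanSpace ℝ (Fin 2)) × (ι → ℝ) //
        ∀ e : κ, ∀ x ∈ segment ℝ (P e) (Q e),
          (inner ℝ ((p.1 (plus e) + p.2 (plus e) • x) -
                  (p.1 (minus e) + p.2 (minus e) • x)) (ν e) : ℝ) = 0},
      α₁ * ∑ e : κ, dist (P e) (Q e) *
          |(u (plus e) - u (minus e)) +
            h e * (inner ℝ (p.1.1 (plus e) + p.1.2 (plus e) • P e) (ν e) : ℝ)|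
      + α₀ * ∑ T : ι, A T * (|p.1.2 T| * Real.sqrt 2)
      + α₀ * ∑ e : κ, (dist (P e) (Q e) / 2) *
          (‖(p.1.1 (plus e) + p.1.2 (plus e) • P e) -
              (p.1.1 (minus e) + p.1.2 (minus e) • P e)‖ +
           ‖(p.1.1 (plus e) + p.1.2 (plus e) • Q e) -
              (p.1.1 (minus e) + p.1.2 (minus e) • Q e)‖)) = 0 ↔
    (∃ (g : EuclideanSpace ℝ (Fin 2)) (c : ℝ),
      ∀ T : ι, u T = (inner ℝ g (m T) : ℝ) + c) :=
  stmt14_general plus minus m A hA P Q hPQ ν h hhν hconn α₀ α₁ hα₀ hα₁ u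
end
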